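/- Let ψ, φ ∈ ℂ^d be unit vectors with |⟨φ, ψ⟩| < 1, and let A, B be Hermitian d×d complex matrices. Set C = A − ⟨ψ, Aψ⟩·I, D = B − ⟨ψ, Bψ⟩·I, choose the sign s ∈ {+1, −1} such that s·i·⟨ψ, [A,B]ψ⟩ = −|⟨ψ, [A,B]ψ⟩|, and let K = (C − s·i·D)(C + s·i·D). Assume K is positive definite with largest eigenvalue λmax and smallest eigenvalue λmin, and set α = √(λmax/λmin). Define θ ∈ (0, π/2] by cos θ = |⟨φ, ψ⟩|, and set Υ = 2·arctan(tan(θ/2)/α) (equivalently Υ = 2·arccot(α·cot(θ/2))). Assume cos Υ > 0. Then ΔA² + ΔB² ≥ |⟨ψ, [A,B]ψ⟩| + |⟨φ, Kψ⟩|² / (⟨φ, Kφ⟩ · cos Υ), where ΔA², ΔB² are the variances in the state ψ. -/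

import Mathlib

open Matrix Complex Real
open scoped ComplexOrder

/-!
Since `[C, D] = [A, B]` and `(s i)² = -1`, the choice of `s` gives
`⟨ψ, K ψ⟩ = ΔA² + ΔB² - |⟨ψ, [A, B] ψ⟩|`, so the claim is a lower bound for `⟨ψ, K ψ⟩`.
It follows from Wielandt's inequality `|⟨φ, K ψ⟩| ≤ cos Υ · √(⟨ψ, K ψ⟩ ⟨φ, K φ⟩)`, together
with `cos Υ ≤ 1`. To prove Wielandt's inequality, turn the phase of `φ` so that `⟨φ, K ψ⟩ ≥ 0`
and compare the Rayleigh quotient of `K` at `√⟨φ, K φ⟩ ψ ± √⟨ψ, K ψ⟩ φ` with `λmax` (for `+`)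
and `λmin` (for `-`); the two bounds combine into the inequality once `cos θ` and `cos Υ` are
written as `(1 - t²) / (1 + t²)` and `(λmax - λmin t²) / (λmax + λmin t²)` with `t = tan (θ / 2)`.
-/

lemma sub_smul_mul_add_smul {R A : Type*} [CommRing R] [Ring A] [Algebra R A] (a b : A) {z : R}
    (hz : z * z = -1) : (a - z • b) * (a + z • b) = a * a + b * b + z • (a * b - b * a) := by
  simp only [sub_mul, mul_add, smul_mul_assoc, mul_smul_comm, smul_smul, hz, neg_one_smul,
    smul_sub]
  abel

lemma commutator_sub_smul_one {R A : Type*} [CommRing R] [Ring A] [Algebra R A] (a b : A)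
    (x y : R) : (a - x • 1) * (b - y • 1) - (b - y • 1) * (a - x • 1) = a * b - b * a := by
  simp only [sub_mul, mul_sub, smul_mul_assoc, mul_smul_comm, one_mul, mul_one]
  module

lemma Real.cos_two_mul_arctan_mul (x : ℝ) : cos (2 * arctan x) * (1 + x ^ 2) = 1 - x ^ 2 := by
  rw [cos_two_mul, cos_sq_arctan]
  field_simp
  ring

lemma Real.cos_two_mul_arctan_div_sqrt {m M : ℝ} (hm : 0 < m) (hM : 0 < M) (t : ℝ) :
    cos (2 * arctan (t / √(M / m))) * (M + m * t ^ 2) = M - m * t ^ 2 := by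
  have h := cos_two_mul_arctan_mul (t / √(M / m))
  rw [div_pow, sq_sqrt (by positivity)] at h
  field_simp at h ⊢
  linarith

lemma sq_div_mul_le_of_le_sqrt_mul_sqrt {Q a b c : ℝ} (hQ : 0 ≤ Q) (ha : 0 < a) (hb : 0 < b)
    (hc : c ≤ 1) (h : Q ≤ √a * √b * c) : Q ^ 2 / (b * c) ≤ a := by
  have hab : 0 < √a * √b := by positivity
  have hc0 : 0 ≤ c := nonneg_of_mul_nonneg_right (hQ.trans h) hab
  refine div_le_of_le_mul₀ (by positivity) ha.le ?_
  calc Q ^ 2 ≤ (√a * √b * c) ^ 2 := pow_le_pow_left₀ hQ h 2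
    _ = a * (b * c) * c := by rw [mul_pow, mul_pow, sq_sqrt ha.le, sq_sqrt hb.le]; ring
    _ ≤ a * (b * c) := mul_le_of_le_one_right (by positivity) hc

lemma wielandt_of_rayleigh_bounds {u v Q c m M t : ℝ} (hu : 0 < u) (hv : 0 < v) (hm : 0 ≤ m)
    (hM : 0 ≤ M) (ht : t ^ 2 ≤ 1) (hc : c * (1 + t ^ 2) ≤ 1 - t ^ 2)
    (hplus : 2 * (u * v) ^ 2 + 2 * (u * v) * Q ≤ M * (u ^ 2 + v ^ 2 + 2 * (u * v) * c))
    (hminus : m * (u ^ 2 + v ^ 2 - 2 * (u * v) * c) ≤ 2 * (u * v) ^ 2 - 2 * (u * v) * Q) :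
    Q * (M + m * t ^ 2) ≤ u * v * (M - m * t ^ 2) := by
  set w := u * v
  have hw : 0 < w := mul_pos hu hv
  have hS : t ^ 2 * (u ^ 2 + v ^ 2 + 2 * w * c) ≤ u ^ 2 + v ^ 2 - 2 * w * c := by
    have h1 : 2 * w * (c * (1 + t ^ 2)) ≤ 2 * w * (1 - t ^ 2) :=
      mul_le_mul_of_nonneg_left hc (by positivity)
    have h2 : 2 * w * (1 - t ^ 2) ≤ (u ^ 2 + v ^ 2) * (1 - t ^ 2) :=
      mul_le_mul_of_nonneg_right (by nlinarith [sq_nonneg (u - v)]) (by linarith)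
    linarith
  have key : 2 * w * (m * t ^ 2 * (w + Q)) ≤ 2 * w * (M * (w - Q)) :=
    calc 2 * w * (m * t ^ 2 * (w + Q)) = m * t ^ 2 * (2 * w ^ 2 + 2 * w * Q) := by ring
      _ ≤ m * t ^ 2 * (M * (u ^ 2 + v ^ 2 + 2 * w * c)) :=
        mul_le_mul_of_nonneg_left hplus (by positivity)
      _ = M * m * (t ^ 2 * (u ^ 2 + v ^ 2 + 2 * w * c)) := by ring
      _ ≤ M * m * (u ^ 2 + v ^ 2 - 2 * w * c) := mul_le_mul_of_nonneg_left hS (by positivity)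
      _ = M * (m * (u ^ 2 + v ^ 2 - 2 * w * c)) := by ring
      _ ≤ M * (2 * w ^ 2 - 2 * w * Q) := mul_le_mul_of_nonneg_left hminus hM
      _ = 2 * w * (M * (w - Q)) := by ring
  linarith [le_of_mul_le_mul_left key (by positivity)]

lemma RCLike.exists_norm_eq_one_conj_mul_eq_norm {𝕜 : Type*} [RCLike 𝕜] (z : 𝕜) :
    ∃ u : 𝕜, ‖u‖ = 1 ∧ starRingEnd 𝕜 u * z = ‖z‖ := by
  rcases eq_or_ne z 0 with rfl | hz
  · exact ⟨1, by simp⟩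
  · have hz' : (‖z‖ : 𝕜) ≠ 0 := by exact_mod_cast norm_ne_zero_iff.mpr hz
    refine ⟨z / ‖z‖, by simp [norm_div, hz], ?_⟩
    rw [map_div₀, RCLike.conj_ofReal, div_mul_eq_mul_div, RCLike.conj_mul]
    field_simp

namespace Matrix

variable {n 𝕜 : Type*} [Fintype n] [RCLike 𝕜] {K : Matrix n n 𝕜}

lemma IsHermitian.star_dotProduct_mulVec_swap (hK : K.IsHermitian) (x y : n → 𝕜) :
    star x ⬝ᵥ K *ᵥ y = star (star y ⬝ᵥ K *ᵥ x) := by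
  rw [← star_dotProduct_star, star_star, star_mulVec, hK.eq, dotProduct_mulVec]

lemma IsHermitian.re_dotProduct_mulVec_smul_add_smul (hK : K.IsHermitian) (x y : n → 𝕜)
    (u v : ℝ) :
    RCLike.re (star ((u : 𝕜) • x + (v : 𝕜) • y) ⬝ᵥ K *ᵥ ((u : 𝕜) • x + (v : 𝕜) • y))
      = u ^ 2 * RCLike.re (star x ⬝ᵥ K *ᵥ x) + v ^ 2 * RCLike.re (star y ⬝ᵥ K *ᵥ y)
        + 2 * u * v * RCLike.re (star y ⬝ᵥ K *ᵥ x) := by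
  simp only [star_add, star_smul, mulVec_add, mulVec_smul, dotProduct_add, add_dotProduct,
    dotProduct_smul, smul_dotProduct, smul_eq_mul, RCLike.star_def, RCLike.conj_ofReal,
    hK.star_dotProduct_mulVec_swap x y, map_add, RCLike.re_ofReal_mul, RCLike.conj_re]
  ring

variable [DecidableEq n]

lemma star_dotProduct_mulVec_centered_sq {ψ : n → 𝕜} (hψ : star ψ ⬝ᵥ ψ = 1)
    (A : Matrix n n 𝕜) :
    star ψ ⬝ᵥ ((A - (star ψ ⬝ᵥ A *ᵥ ψ) • 1) * (A - (star ψ ⬝ᵥ A *ᵥ ψ) • 1)) *ᵥ ψ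
      = star ψ ⬝ᵥ (A * A) *ᵥ ψ - (star ψ ⬝ᵥ A *ᵥ ψ) ^ 2 := by
  simp only [sub_mul, mul_sub, smul_mul_assoc, mul_smul_comm, one_mul, mul_one, sub_mulVec,
    smul_mulVec, one_mulVec, dotProduct_sub, dotProduct_smul, smul_eq_mul, hψ]
  ring

lemma IsHermitian.sub_smul_one_eq_conj (hK : K.IsHermitian) (c : ℝ) :
    K - (c : 𝕜) • 1 = Unitary.conjStarAlgAut 𝕜 _ hK.eigenvectorUnitary
      (diagonal fun i ↦ ((hK.eigenvalues i - c : ℝ) : 𝕜)) := by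
  have : (diagonal fun i ↦ ((hK.eigenvalues i - c : ℝ) : 𝕜))
      = diagonal (RCLike.ofReal ∘ hK.eigenvalues) - (c : 𝕜) • (1 : Matrix n n 𝕜) := by
    rw [← diagonal_one, ← diagonal_smul, diagonal_sub]
    simp
  conv_lhs => rw [hK.spectral_theorem]
  rw [this, map_sub, map_smul, map_one]

lemma IsHermitian.posSemidef_sub_smul_one (hK : K.IsHermitian) {c : ℝ}
    (hc : ∀ i, c ≤ hK.eigenvalues i) : (K - (c : 𝕜) • 1).PosSemidef := by
  rw [hK.sub_smul_one_eq_conj, Unitary.conjStarAlgAut_apply,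
    (Unitary.isUnit_coe).posSemidef_star_right_conjugate_iff, posSemidef_diagonal_iff]
  intro i
  simpa using hc i

lemma IsHermitian.posSemidef_smul_one_sub (hK : K.IsHermitian) {c : ℝ}
    (hc : ∀ i, hK.eigenvalues i ≤ c) : ((c : 𝕜) • 1 - K).PosSemidef := by
  rw [← neg_sub, hK.sub_smul_one_eq_conj, ← map_neg, Unitary.conjStarAlgAut_apply,
    (Unitary.isUnit_coe).posSemidef_star_right_conjugate_iff, diagonal_neg,
    posSemidef_diagonal_iff]
  intro i
  simpa using hc i

lemma IsHermitian.le_re_dotProduct_mulVec (hK : K.IsHermitian) {c : ℝ}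
    (hc : ∀ i, c ≤ hK.eigenvalues i) (x : n → 𝕜) :
    c * RCLike.re (star x ⬝ᵥ x) ≤ RCLike.re (star x ⬝ᵥ K *ᵥ x) := by
  have := (hK.posSemidef_sub_smul_one hc).re_dotProduct_nonneg x
  simp only [sub_mulVec, smul_mulVec, one_mulVec, dotProduct_sub, dotProduct_smul, smul_eq_mul,
    map_sub, RCLike.re_ofReal_mul] at this
  linarith

lemma IsHermitian.re_dotProduct_mulVec_le (hK : K.IsHermitian) {c : ℝ}
    (hc : ∀ i, hK.eigenvalues i ≤ c) (x : n → 𝕜) :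
    RCLike.re (star x ⬝ᵥ K *ᵥ x) ≤ c * RCLike.re (star x ⬝ᵥ x) := by
  have := (hK.posSemidef_smul_one_sub hc).re_dotProduct_nonneg x
  simp only [sub_mulVec, smul_mulVec, one_mulVec, dotProduct_sub, dotProduct_smul, smul_eq_mul,
    map_sub, RCLike.re_ofReal_mul] at this
  linarith

theorem IsHermitian.wielandt_of_dotProduct_eq_norm (hK : K.IsHermitian) {m M t : ℝ}
    (hm : 0 < m) (hlo : ∀ i, m ≤ hK.eigenvalues i) (hhi : ∀ i, hK.eigenvalues i ≤ M)
    {x y : n → 𝕜} (hx : star x ⬝ᵥ x = 1) (hy : star y ⬝ᵥ y = 1)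
    (hxy : ‖star y ⬝ᵥ x‖ * (1 + t ^ 2) ≤ 1 - t ^ 2)
    (hreal : star y ⬝ᵥ K *ᵥ x = ‖star y ⬝ᵥ K *ᵥ x‖) :
    ‖star y ⬝ᵥ K *ᵥ x‖ * (M + m * t ^ 2)
      ≤ √(RCLike.re (star x ⬝ᵥ K *ᵥ x)) * √(RCLike.re (star y ⬝ᵥ K *ᵥ y)) * (M - m * t ^ 2) := by
  set a := RCLike.re (star x ⬝ᵥ K *ᵥ x) with ha_def
  set b := RCLike.re (star y ⬝ᵥ K *ᵥ y) with hb_def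
  set Q := ‖star y ⬝ᵥ K *ᵥ x‖
  set c := RCLike.re (star y ⬝ᵥ x) with hc_def
  have hQ : RCLike.re (star y ⬝ᵥ K *ᵥ x) = Q := by rw [hreal, RCLike.ofReal_re]
  have hform (r : ℝ) := hK.re_dotProduct_mulVec_smul_add_smul x y √b r
  have hnorm (r : ℝ) := isHermitian_one.re_dotProduct_mulVec_smul_add_smul x y √b r
  simp only [one_mulVec, hx, hy, RCLike.one_re] at hnorm
  have hplus := hK.re_dotProduct_mulVec_le hhi ((√b : 𝕜) • x + (√a : 𝕜) • y)
  have hminus := hK.le_re_dotProduct_mulVec hlo ((√b : 𝕜) • x + ((-√a : ℝ) : 𝕜) • y)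
  simp only [hform, hnorm, hQ, neg_sq, ← ha_def, ← hb_def, ← hc_def] at hplus hminus
  have ha : m ≤ a := by simpa [hx] using hK.le_re_dotProduct_mulVec hlo x
  have hb : m ≤ b := by simpa [hy] using hK.le_re_dotProduct_mulVec hlo y
  have hM : a ≤ M := by simpa [hx] using hK.re_dotProduct_mulVec_le hhi x
  have hu : √a ^ 2 = a := sq_sqrt (by linarith)
  have hv : √b ^ 2 = b := sq_sqrt (by linarith)
  rw [hu, hv] at hplus hminus
  have hc : c * (1 + t ^ 2) ≤ 1 - t ^ 2 :=
    (mul_le_mul_of_nonneg_right (RCLike.re_le_norm _) (by positivity)).trans hxy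
  have ht : t ^ 2 ≤ 1 := by
    linarith [mul_nonneg (norm_nonneg (star y ⬝ᵥ x)) (by positivity : (0 : ℝ) ≤ 1 + t ^ 2)]
  refine wielandt_of_rayleigh_bounds (Real.sqrt_pos.2 (by linarith))
    (Real.sqrt_pos.2 (by linarith)) hm.le (by linarith) ht hc ?_ ?_
  · rw [mul_pow, hu, hv]
    linarith
  · rw [mul_pow, hu, hv]
    linarith

theorem IsHermitian.wielandt (hK : K.IsHermitian) {m M t : ℝ}
    (hm : 0 < m) (hlo : ∀ i, m ≤ hK.eigenvalues i) (hhi : ∀ i, hK.eigenvalues i ≤ M)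
    {x y : n → 𝕜} (hx : star x ⬝ᵥ x = 1) (hy : star y ⬝ᵥ y = 1)
    (hxy : ‖star y ⬝ᵥ x‖ * (1 + t ^ 2) ≤ 1 - t ^ 2) :
    ‖star y ⬝ᵥ K *ᵥ x‖ * (M + m * t ^ 2)
      ≤ √(RCLike.re (star x ⬝ᵥ K *ᵥ x)) * √(RCLike.re (star y ⬝ᵥ K *ᵥ y)) * (M - m * t ^ 2) := by
  obtain ⟨u, hu, hux⟩ := RCLike.exists_norm_eq_one_conj_mul_eq_norm (star y ⬝ᵥ K *ᵥ x)
  have hcu : starRingEnd 𝕜 u * u = 1 := by rw [RCLike.conj_mul, hu]; simp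
  have hrot (v : n → 𝕜) : star (u • y) ⬝ᵥ v = starRingEnd 𝕜 u * (star y ⬝ᵥ v) := by
    rw [star_smul, smul_dotProduct, smul_eq_mul, RCLike.star_def]
  have hrot' (v : n → 𝕜) : star (u • y) ⬝ᵥ u • v = star y ⬝ᵥ v := by
    rw [hrot, dotProduct_smul, smul_eq_mul, ← mul_assoc, hcu, one_mul]
  have key := hK.wielandt_of_dotProduct_eq_norm hm hlo hhi hx (y := u • y) (by rw [hrot', hy])
    (by rwa [hrot, norm_mul, RCLike.norm_conj, hu, one_mul])
    (by rw [hrot, hux, RCLike.norm_ofReal, abs_norm])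
  rwa [mulVec_smul, hrot', hrot, hux, RCLike.norm_ofReal, abs_norm] at key

end Matrix

theorem stmt5_general {d : ℕ} (ψ φ : Fin d → ℂ)
    (hψ : star ψ ⬝ᵥ ψ = 1) (hφ : star φ ⬝ᵥ φ = 1)
    (A B : Matrix (Fin d) (Fin d) ℂ)
    (s : ℂ) (hs : s = 1 ∨ s = -1)
    (hsign : s * Complex.I * (star ψ ⬝ᵥ (A * B - B * A).mulVec ψ)
      = -(‖star ψ ⬝ᵥ (A * B - B * A).mulVec ψ‖ : ℂ))
    (C D K : Matrix (Fin d) (Fin d) ℂ)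
    (hC : C = A - (star ψ ⬝ᵥ A.mulVec ψ) • (1 : Matrix (Fin d) (Fin d) ℂ))
    (hD : D = B - (star ψ ⬝ᵥ B.mulVec ψ) • (1 : Matrix (Fin d) (Fin d) ℂ))
    (hK : K = (C - (s * Complex.I) • D) * (C + (s * Complex.I) • D))
    (hKpd : K.PosDef)
    (lmax lmin : ℝ)
    (hmax : IsGreatest (Set.range hKpd.1.eigenvalues) lmax)
    (hmin : IsLeast (Set.range hKpd.1.eigenvalues) lmin)
    (α : ℝ) (hα : α = Real.sqrt (lmax / lmin))
    (θ : ℝ) (hθ : θ ∈ Set.Ioc 0 (Real.pi / 2))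
    (hcos : Real.cos θ = ‖star φ ⬝ᵥ ψ‖)
    (Υ : ℝ) (hΥdef : Υ = 2 * Real.arctan (Real.tan (θ / 2) / α)) :
    ((star ψ ⬝ᵥ (A * A).mulVec ψ - (star ψ ⬝ᵥ A.mulVec ψ) ^ 2).re
      + (star ψ ⬝ᵥ (B * B).mulVec ψ - (star ψ ⬝ᵥ B.mulVec ψ) ^ 2).re)
    ≥ ‖star ψ ⬝ᵥ (A * B - B * A).mulVec ψ‖
      + ‖star φ ⬝ᵥ K.mulVec ψ‖ ^ 2
          / ((star φ ⬝ᵥ K.mulVec φ).re * Real.cos Υ) := by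
  obtain ⟨hθ0, hθ1⟩ := hθ
  have hz : (s * I) * (s * I) = -1 := by
    rcases hs with rfl | rfl <;> simp [mul_comm _ I]
  have hKψ : star ψ ⬝ᵥ K *ᵥ ψ = (star ψ ⬝ᵥ (A * A) *ᵥ ψ - (star ψ ⬝ᵥ A *ᵥ ψ) ^ 2)
      + (star ψ ⬝ᵥ (B * B) *ᵥ ψ - (star ψ ⬝ᵥ B *ᵥ ψ) ^ 2)
      - ‖star ψ ⬝ᵥ (A * B - B * A) *ᵥ ψ‖ := by
    rw [hK, sub_smul_mul_add_smul C D hz, hC, hD, commutator_sub_smul_one, add_mulVec,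
      add_mulVec, smul_mulVec, dotProduct_add, dotProduct_add, dotProduct_smul, smul_eq_mul,
      hsign, star_dotProduct_mulVec_centered_sq hψ, star_dotProduct_mulVec_centered_sq hψ]
    ring
  have hlo : ∀ i, lmin ≤ hKpd.1.eigenvalues i := fun i ↦ hmin.2 ⟨i, rfl⟩
  have hhi : ∀ i, hKpd.1.eigenvalues i ≤ lmax := fun i ↦ hmax.2 ⟨i, rfl⟩
  have hm : 0 < lmin := by obtain ⟨i, rfl⟩ := hmin.1; exact hKpd.eigenvalues_pos i
  have hM : 0 < lmax := by obtain ⟨i, rfl⟩ := hmax.1; exact hKpd.eigenvalues_pos i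
  have ha : lmin ≤ (star ψ ⬝ᵥ K *ᵥ ψ).re := by
    simpa [hψ] using hKpd.1.le_re_dotProduct_mulVec hlo ψ
  have hb : lmin ≤ (star φ ⬝ᵥ K *ᵥ φ).re := by
    simpa [hφ] using hKpd.1.le_re_dotProduct_mulVec hlo φ
  set t := Real.tan (θ / 2)
  have hθt : θ = 2 * Real.arctan t := by
    rw [Real.arctan_tan (by linarith [pi_pos]) (by linarith)]
    ring
  have hW := hKpd.1.wielandt hm hlo hhi hψ hφ (t := t)
    (by rw [← hcos, hθt, Real.cos_two_mul_arctan_mul])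
  have hΥt : Real.cos Υ * (lmax + lmin * t ^ 2) = lmax - lmin * t ^ 2 := by
    rw [hΥdef, hα]
    exact Real.cos_two_mul_arctan_div_sqrt hm hM t
  have hQ : ‖star φ ⬝ᵥ K *ᵥ ψ‖
      ≤ √(star ψ ⬝ᵥ K *ᵥ ψ).re * √(star φ ⬝ᵥ K *ᵥ φ).re * Real.cos Υ := by
    refine le_of_mul_le_mul_right ?_ (by positivity : 0 < lmax + lmin * t ^ 2)
    rwa [mul_assoc _ (Real.cos Υ), hΥt]
  have := sq_div_mul_le_of_le_sqrt_mul_sqrt (norm_nonneg _) (by linarith) (by linarith)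
    (Real.cos_le_one Υ) hQ
  rw [hKψ, sub_re, add_re, ofReal_re] at this
  linarith

/-- even stronger uncertainty relation for pure states, based on the
Bauer–Householder inequality.  With `K` the uncertainty matrix (sign chosen so that
`s·i·⟨ψ,[A,B]ψ⟩ = -|⟨ψ,[A,B]ψ⟩|`), `K` positive definite with extreme eigenvalues
`λmax, λmin`, `α = √(λmax/λmin)`, `cos θ = |⟨φ,ψ⟩|` with `θ ∈ (0, π/2]`, and
`Υ = 2·arctan(tan(θ/2)/α)` with `cos Υ > 0`:
`ΔA² + ΔB² ≥ |⟨ψ,[A,B]ψ⟩| + |⟨φ,Kψ⟩|²/(⟨φ,Kφ⟩·cos Υ)`. -/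
theorem stmt5 {d : ℕ} (ψ φ : Fin d → ℂ)
    (hψ : star ψ ⬝ᵥ ψ = 1) (hφ : star φ ⬝ᵥ φ = 1)
    (hover : ‖star φ ⬝ᵥ ψ‖ < 1)
    (A B : Matrix (Fin d) (Fin d) ℂ) (hA : A.IsHermitian) (hB : B.IsHermitian)
    (s : ℂ) (hs : s = 1 ∨ s = -1)
    (hsign : s * Complex.I * (star ψ ⬝ᵥ (A * B - B * A).mulVec ψ)
      = -(‖star ψ ⬝ᵥ (A * B - B * A).mulVec ψ‖ : ℂ))
    (C D K : Matrix (Fin d) (Fin d) ℂ)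
    (hC : C = A - (star ψ ⬝ᵥ A.mulVec ψ) • (1 : Matrix (Fin d) (Fin d) ℂ))
    (hD : D = B - (star ψ ⬝ᵥ B.mulVec ψ) • (1 : Matrix (Fin d) (Fin d) ℂ))
    (hK : K = (C - (s * Complex.I) • D) * (C + (s * Complex.I) • D))
    (hKpd : K.PosDef)
    (lmax lmin : ℝ)
    (hmax : IsGreatest (Set.range hKpd.1.eigenvalues) lmax)
    (hmin : IsLeast (Set.range hKpd.1.eigenvalues) lmin)
    (α : ℝ) (hα : α = Real.sqrt (lmax / lmin))
    (θ : ℝ) (hθ : θ ∈ Set.Ioc 0 (Real.pi / 2))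
    (hcos : Real.cos θ = ‖star φ ⬝ᵥ ψ‖)
    (Υ : ℝ) (hΥdef : Υ = 2 * Real.arctan (Real.tan (θ / 2) / α))
    (hΥ : Real.cos Υ > 0) :
    ((star ψ ⬝ᵥ (A * A).mulVec ψ - (star ψ ⬝ᵥ A.mulVec ψ) ^ 2).re
      + (star ψ ⬝ᵥ (B * B).mulVec ψ - (star ψ ⬝ᵥ B.mulVec ψ) ^ 2).re)
    ≥ ‖star ψ ⬝ᵥ (A * B - B * A).mulVec ψ‖
      + ‖star φ ⬝ᵥ K.mulVec ψ‖ ^ 2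
          / ((star φ ⬝ᵥ K.mulVec φ).re * Real.cos Υ) :=
  stmt5_general ψ φ hψ hφ A B s hs hsign C D K hC hD hK hKpd lmax lmin hmax hmin α hα θ hθ hcos Υ
    hΥdef
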